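/- Let 0 < α < 1/2. Define the symbol σ^{+,+}(ξ,η) = |ξ+η|·⟨ξ⟩^α·⟨η⟩^α / (2·⟨ξ+η⟩^{1+α}·(|ξ|⟨ξ⟩ + |η|⟨η⟩ − |ξ+η|⟨ξ+η⟩)) for nonzero integers ξ, η with ξ+η ≠ 0, where ⟨ξ⟩ = √(1+ξ²). Then there exist constants c, C > 0 such that for all such ξ, η: c/(⟨ξ+η⟩^α⟨ξ⟩^{1−α}⟨η⟩^{1−α}) ≤ |σ^{+,+}(ξ,η)| ≤ C/(⟨ξ+η⟩^α⟨ξ⟩^{1−α}⟨η⟩^{1−α}). -/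
import Mathlib
noncomputable def jap (x : ℝ) : ℝ := Real.sqrt (1 + x^2)
lemma jap_pos (x : ℝ) : 0 < jap x := Real.sqrt_pos.2 (by positivity)
lemma jap_sq (x : ℝ) : jap x ^ 2 = 1 + x ^ 2 := Real.sq_sqrt (by positivity)
lemma le_jap {x : ℝ} (hx : 0 ≤ x) : x ≤ jap x := by
  have : x = Real.sqrt (x ^ 2) := (Real.sqrt_sq hx).symm
  rw [this, jap]
  exact Real.sqrt_le_sqrt (by nlinarith [Real.sq_sqrt hx])
lemma jap_le {x : ℝ} (hx : 1 ≤ x) : jap x ≤ Real.sqrt 2 * x := by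
  rw [jap]
  have : Real.sqrt 2 * x = Real.sqrt (2 * x ^ 2) := by
    rw [Real.sqrt_mul (by norm_num), Real.sqrt_sq (by linarith)]
  rw [this]
  exact Real.sqrt_le_sqrt (by nlinarith)
lemma jap_abs (x : ℝ) : jap |x| = jap x := by rw [jap, jap, sq_abs]
lemma jap_add_le {x y : ℝ} (hx : 0 ≤ x) (hy : 0 ≤ y) :
    jap (x + y) ≤ jap x + jap y := by
  have h1 := jap_sq x
  have h2 := jap_sq y
  have hxy : x * y ≤ jap x * jap y :=
    mul_le_mul (le_jap hx) (le_jap hy) hy ((jap_pos x).le)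
  have h0 : jap (x + y) = Real.sqrt (1 + (x + y) ^ 2) := rfl
  rw [h0]
  have h3 : 1 + (x + y) ^ 2 ≤ (jap x + jap y) ^ 2 := by nlinarith
  calc Real.sqrt (1 + (x + y) ^ 2) ≤ Real.sqrt ((jap x + jap y) ^ 2) :=
        Real.sqrt_le_sqrt h3
    _ = jap x + jap y := Real.sqrt_sq (by have := jap_pos x; have := jap_pos y; linarith)
lemma jap_mul_ge (x y : ℝ) :
    jap y ^ 2 + x * y ≤ jap (x + y) * jap y := by
  have h1 := jap_sq y
  have h2 := jap_sq (x + y)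
  have hp1 := jap_pos y
  have hp2 := jap_pos (x + y)
  have hv2 : (jap (x + y) * jap y) ^ 2 = (1 + (x + y) ^ 2) * (1 + y ^ 2) := by
    rw [mul_pow, h1, h2]
  nlinarith [mul_pos hp1 hp2, sq_nonneg x, mul_nonneg (le_of_lt hp1) (le_of_lt hp2)]

lemma s2_sq : Real.sqrt 2 ^ 2 = 2 := Real.sq_sqrt (by norm_num)
lemma s2_pos : (0:ℝ) < Real.sqrt 2 := Real.sqrt_pos.2 (by norm_num)
lemma s2_lt : Real.sqrt 2 < 3/2 := by
  nlinarith [s2_sq, s2_pos]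
lemma s2_gt : (1:ℝ) < Real.sqrt 2 := by nlinarith [s2_sq, s2_pos]

lemma Dlow_same {a b : ℝ} (ha : 1 ≤ a) (hb : 1 ≤ b) (hab : a ≤ b) :
    (2 - Real.sqrt 2)/2 * (a*b) ≤ (a+b) * jap (a+b) - a * jap a - b * jap b := by
  have hJ := jap_pos b
  have hA := jap_pos a
  have h1 : (a+b) * (jap b ^ 2 + a*b) ≤ (a+b) * (jap (a+b) * jap b) :=
    mul_le_mul_of_nonneg_left (jap_mul_ge a b) (by linarith)
  have hA15 : jap a ≤ 3/2 * a := le_trans (jap_le ha) (by nlinarith [s2_lt, ha])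
  have hJ15 : jap b ≤ 3/2 * b := le_trans (jap_le hb) (by nlinarith [s2_lt, hb])
  have p1 : a * (jap a * jap b) ≤ a * (9/4 * (a*b)) := by
    apply mul_le_mul_of_nonneg_left _ (by linarith)
    calc jap a * jap b ≤ (3/2*a) * (3/2*b) :=
          mul_le_mul hA15 hJ15 hJ.le (by linarith)
      _ = 9/4 * (a*b) := by ring
  have p2 : 0 ≤ (b - a) * (a * b) := mul_nonneg (by linarith) (by nlinarith)
  have q1 : a * jap b ^ 2 = a + a * b ^ 2 := by rw [jap_sq b]; ring
  have q2 : b * jap b ^ 2 = b + b * b ^ 2 := by rw [jap_sq b]; ring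
  have t4 : 0 ≤ (Real.sqrt 2 - 1) * (a * b * jap b) :=
    mul_nonneg (by nlinarith [s2_gt]) (by positivity)
  have u1 : a * b * jap b ≤ a * b * (3/2 * b) :=
    mul_le_mul_of_nonneg_left hJ15 (by nlinarith)
  have main : (2 - Real.sqrt 2)/2 * (a*b) * jap b ≤
      ((a+b) * jap (a+b) - a * jap a - b * jap b) * jap b := by
    nlinarith [h1, p1, p2, q1, q2, t4, u1, ha, hb]
  exact le_of_mul_le_mul_right main hJ

lemma Dup_same {a b : ℝ} (ha : 1 ≤ a) (hb : 1 ≤ b) :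
    (a+b) * jap (a+b) - a * jap a - b * jap b ≤ 2 * Real.sqrt 2 * (a*b) := by
  have h1 : jap (a+b) ≤ jap a + jap b := jap_add_le (by linarith) (by linarith)
  have h2 := jap_le ha
  have h3 := jap_le hb
  nlinarith [mul_le_mul_of_nonneg_left h1 (show (0:ℝ) ≤ a + b by linarith)]

lemma Dlow_opp {b s : ℝ} (hb : 1 ≤ b) (hs : 1 ≤ s) :
    (2 - Real.sqrt 2)/2 * ((b+s)*b) ≤ (b+s) * jap (b+s) + b * jap b - s * jap s := by
  have hS := jap_pos s
  have hB := jap_pos b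
  have h1 : (b+s) * (jap s ^ 2 + b*s) ≤ (b+s) * (jap (b+s) * jap s) :=
    mul_le_mul_of_nonneg_left (jap_mul_ge b s) (by linarith)
  have hS15 : jap s ≤ 3/2 * s := le_trans (jap_le hs) (by nlinarith [s2_lt, hs])
  have t1 : 0 ≤ b * jap s ^ 2 := mul_nonneg (by linarith) (sq_nonneg _)
  have t2 : 0 ≤ b * jap b * jap s := by positivity
  have t4 : 0 ≤ (Real.sqrt 2 - 1) * (b * (b+s) * jap s) :=
    mul_nonneg (by nlinarith [s2_gt]) (by positivity)
  have u1 : b * (b+s) * jap s ≤ b * (b+s) * (3/2 * s) :=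
    mul_le_mul_of_nonneg_left hS15 (by nlinarith)
  have main : (2 - Real.sqrt 2)/2 * ((b+s)*b) * jap s ≤
      ((b+s) * jap (b+s) + b * jap b - s * jap s) * jap s := by
    nlinarith [h1, t1, t2, t4, u1]
  exact le_of_mul_le_mul_right main hS

lemma Dup_opp {b s : ℝ} (hb : 1 ≤ b) (hs : 1 ≤ s) :
    (b+s) * jap (b+s) + b * jap b - s * jap s ≤ 4 * Real.sqrt 2 * ((b+s)*b) := by
  have h1 : jap (b+s) ≤ jap b + jap s := jap_add_le (by linarith) (by linarith)
  have h2 := jap_le hb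
  have h3 := jap_le hs
  have hS := jap_pos s
  have hB := jap_pos b
  nlinarith [mul_le_mul_of_nonneg_left h1 (show (0:ℝ) ≤ b + s by linarith), s2_pos, s2_gt,
    mul_nonneg (mul_nonneg s2_pos.le (by linarith : (0:ℝ) ≤ b)) (by linarith : (0:ℝ) ≤ s)]

lemma abs_add_cases (x y : ℝ) :
    |x + y| = |x| + |y| ∨ |x| = |y| + |x + y| ∨ |y| = |x| + |x + y| := by
  rcases le_total 0 x with hx | hx <;> rcases le_total 0 y with hy | hy
  · left; rw [abs_of_nonneg hx, abs_of_nonneg hy, abs_of_nonneg (by linarith)]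
  · rcases le_total 0 (x + y) with hxy | hxy
    · right; left
      rw [abs_of_nonneg hx, abs_of_nonpos hy, abs_of_nonneg hxy]; ring
    · right; right
      rw [abs_of_nonneg hx, abs_of_nonpos hy, abs_of_nonpos hxy]; ring
  · rcases le_total 0 (x + y) with hxy | hxy
    · right; right
      rw [abs_of_nonpos hx, abs_of_nonneg hy, abs_of_nonneg hxy]; ring
    · right; left
      rw [abs_of_nonpos hx, abs_of_nonneg hy, abs_of_nonpos hxy]; ring
  · left
    rw [abs_of_nonpos hx, abs_of_nonpos hy, abs_of_nonpos (by linarith)]; ring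

lemma Dkey {a b s : ℝ} (ha : 1 ≤ a) (hb : 1 ≤ b) (hs : 1 ≤ s)
    (hcase : s = a + b ∨ a = b + s ∨ b = a + s) :
    (2 - Real.sqrt 2)/2 * (a*b) ≤ |a * jap a + b * jap b - s * jap s| ∧
    |a * jap a + b * jap b - s * jap s| ≤ 4 * Real.sqrt 2 * (a*b) := by
  have hc0 : (0:ℝ) < (2 - Real.sqrt 2)/2 := by have := s2_lt; linarith
  rcases hcase with h | h | h
  · subst h
    have hlow : (2 - Real.sqrt 2)/2 * (a*b) ≤ (a+b) * jap (a+b) - a * jap a - b * jap b := by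
      rcases le_total a b with hab | hab
      · exact Dlow_same ha hb hab
      · have := Dlow_same hb ha hab
        rw [add_comm b a] at this; linarith [this]
    have hup : (a+b) * jap (a+b) - a * jap a - b * jap b ≤ 2 * Real.sqrt 2 * (a*b) :=
      Dup_same ha hb
    have habp : (0:ℝ) < a * b := mul_pos (by linarith) (by linarith)
    have hc : 0 < (2 - Real.sqrt 2)/2 * (a*b) := mul_pos hc0 habp
    have hneg : a * jap a + b * jap b - (a+b) * jap (a+b) ≤ 0 := by linarith
    rw [abs_of_nonpos hneg]
    refine ⟨by linarith, ?_⟩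
    nlinarith [mul_pos s2_pos habp]
  · subst h
    have hlow := Dlow_opp hb hs
    have hup := Dup_opp hb hs
    have habp : (0:ℝ) < (b+s) * b := mul_pos (by linarith) (by linarith)
    have hpos : 0 ≤ (b+s) * jap (b+s) + b * jap b - s * jap s := by
      nlinarith [mul_pos hc0 habp]
    rw [abs_of_nonneg hpos]
    exact ⟨hlow, hup⟩
  · subst h
    have hlow := Dlow_opp ha hs
    have hup := Dup_opp ha hs
    have habp : (0:ℝ) < (a+s) * a := mul_pos (by linarith) (by linarith)
    have hpos : 0 ≤ a * jap a + (a+s) * jap (a+s) - s * jap s := by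
      nlinarith [mul_pos hc0 habp]
    rw [abs_of_nonneg hpos]
    constructor
    · have e : (2 - Real.sqrt 2)/2 * (a*(a+s)) = (2 - Real.sqrt 2)/2 * ((a+s)*a) := by ring
      rw [e]; linarith
    · have e : 4 * Real.sqrt 2 * (a*(a+s)) = 4 * Real.sqrt 2 * ((a+s)*a) := by ring
      rw [e]; linarith

noncomputable def sigmaPP (α : ℝ) (ξ η : ℤ) : ℝ :=
  |(ξ : ℝ) + η| * jap ξ ^ α * jap η ^ α /
    (2 * jap ((ξ : ℝ) + η) ^ (1 + α) *
      (|(ξ : ℝ)| * jap ξ + |(η : ℝ)| * jap η - |(ξ : ℝ) + η| * jap ((ξ : ℝ) + η)))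

theorem sigmaPP_size (α : ℝ) (hα : 0 < α) (hα' : α < 1/2) :
    ∃ c C : ℝ, 0 < c ∧ 0 < C ∧
      ∀ ξ η : ℤ, ξ ≠ 0 → η ≠ 0 → ξ + η ≠ 0 →
        c / (jap ((ξ : ℝ) + η) ^ α * jap ξ ^ (1 - α) * jap η ^ (1 - α))
            ≤ |sigmaPP α ξ η| ∧
        |sigmaPP α ξ η|
            ≤ C / (jap ((ξ : ℝ) + η) ^ α * jap ξ ^ (1 - α) * jap η ^ (1 - α)) := by
  refine ⟨1/16, 4, by norm_num, by norm_num, fun ξ η hξ hη hξη => ?_⟩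
  set a : ℝ := |(ξ : ℝ)| with ha_def
  set b : ℝ := |(η : ℝ)| with hb_def
  set s : ℝ := |(ξ : ℝ) + η| with hs_def
  have ha : 1 ≤ a := by
    rw [ha_def, ← Int.cast_abs]
    exact_mod_cast Int.one_le_abs hξ
  have hb : 1 ≤ b := by
    rw [hb_def, ← Int.cast_abs]
    exact_mod_cast Int.one_le_abs hη
  have hs : 1 ≤ s := by
    rw [hs_def, show ((ξ:ℝ) + η) = ((ξ + η : ℤ) : ℝ) by push_cast; ring, ← Int.cast_abs]
    exact_mod_cast Int.one_le_abs hξη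
  have e1 : jap (ξ : ℝ) = jap a := (jap_abs _).symm
  have e2 : jap (η : ℝ) = jap b := (jap_abs _).symm
  have e3 : jap ((ξ : ℝ) + η) = jap s := (jap_abs _).symm
  have hcase : s = a + b ∨ a = b + s ∨ b = a + s := abs_add_cases _ _
  obtain ⟨hD1, hD2⟩ := Dkey ha hb hs hcase
  set D : ℝ := a * jap a + b * jap b - s * jap s with hD_def
  have hc0 : (0:ℝ) < (2 - Real.sqrt 2)/2 := by have := s2_lt; linarith
  have habp : (0:ℝ) < a * b := mul_pos (by linarith) (by linarith)
  have hDpos : 0 < |D| := lt_of_lt_of_le (mul_pos hc0 habp) hD1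
  have hA := jap_pos a
  have hB := jap_pos b
  have hS := jap_pos s
  have hxu : jap a ^ α * jap a ^ (1 - α) = jap a := by
    rw [← Real.rpow_add hA]; norm_num
  have hyv : jap b ^ α * jap b ^ (1 - α) = jap b := by
    rw [← Real.rpow_add hB]; norm_num
  have hP : jap s ^ (1 + α) = jap s * jap s ^ α := by
    rw [Real.rpow_add hS, Real.rpow_one]
  have hz : (0:ℝ) < jap s ^ α := Real.rpow_pos_of_pos hS α
  have hu : (0:ℝ) < jap a ^ (1 - α) := Real.rpow_pos_of_pos hA _
  have hv : (0:ℝ) < jap b ^ (1 - α) := Real.rpow_pos_of_pos hB _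
  have hx : (0:ℝ) < jap a ^ α := Real.rpow_pos_of_pos hA _
  have hy : (0:ℝ) < jap b ^ α := Real.rpow_pos_of_pos hB _
  have hsig : sigmaPP α ξ η = s * jap a ^ α * jap b ^ α / (2 * jap s ^ (1 + α) * D) := by
    rw [sigmaPP, e1, e2, e3]
  have hnum : (0:ℝ) ≤ s * jap a ^ α * jap b ^ α := by positivity
  have hden2 : (0:ℝ) < 2 * jap s ^ (1 + α) := by positivity
  have habs : |sigmaPP α ξ η| =
      s * jap a ^ α * jap b ^ α / (2 * jap s ^ (1 + α) * |D|) := by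
    rw [hsig, abs_div, abs_mul (2 * jap s ^ (1 + α)) D, abs_of_nonneg hnum,
      abs_of_pos hden2]
  set Q : ℝ := jap s ^ α * jap a ^ (1 - α) * jap b ^ (1 - α) with hQ_def
  have hQ : 0 < Q := by positivity
  have key : |sigmaPP α ξ η| * Q = s * jap a * jap b / (2 * jap s * |D|) := by
    rw [habs, hP, hQ_def, div_mul_eq_mul_div]
    have enum : s * jap a ^ α * jap b ^ α *
        (jap s ^ α * jap a ^ (1 - α) * jap b ^ (1 - α)) =
        s * jap a * jap b * jap s ^ α := by
      calc s * jap a ^ α * jap b ^ α *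
          (jap s ^ α * jap a ^ (1 - α) * jap b ^ (1 - α))
          = s * (jap a ^ α * jap a ^ (1 - α)) * (jap b ^ α * jap b ^ (1 - α)) *
            jap s ^ α := by ring
        _ = s * jap a * jap b * jap s ^ α := by rw [hxu, hyv]
    rw [enum, show 2 * (jap s * jap s ^ α) * |D| = 2 * jap s * |D| * jap s ^ α by ring,
      mul_div_mul_right _ _ (ne_of_gt hz)]
  rw [e1, e2, e3]
  have hgoal_den : (0:ℝ) < 2 * jap s * |D| := by positivity
  constructor
  · rw [div_le_iff₀ hQ, key, le_div_iff₀ hgoal_den]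
    have hSle : jap s ≤ Real.sqrt 2 * s := jap_le hs
    have w : (Real.sqrt 2 * s) * (4 * Real.sqrt 2 * (a*b)) = 8 * (s * (a*b)) := by
      rw [show (Real.sqrt 2 * s) * (4 * Real.sqrt 2 * (a*b)) =
          4 * (Real.sqrt 2 * Real.sqrt 2) * (s*(a*b)) by ring,
        Real.mul_self_sqrt (by norm_num : (0:ℝ) ≤ 2)]
      ring
    have h1 : jap s * |D| ≤ (Real.sqrt 2 * s) * (4 * Real.sqrt 2 * (a*b)) :=
      mul_le_mul hSle hD2 (abs_nonneg _) (by positivity)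
    have h2 : a * b ≤ jap a * jap b :=
      mul_le_mul (le_jap (by linarith)) (le_jap (by linarith)) (by linarith) hA.le
    have h3 : s * (a*b) ≤ s * (jap a * jap b) :=
      mul_le_mul_of_nonneg_left h2 (by linarith)
    rw [w] at h1
    linarith [h1, h3]
  · rw [le_div_iff₀ hQ, key, div_le_iff₀ hgoal_den]
    have hAle : jap a ≤ Real.sqrt 2 * a := jap_le ha
    have hBle : jap b ≤ Real.sqrt 2 * b := jap_le hb
    have w2 : (Real.sqrt 2 * a) * (Real.sqrt 2 * b) = 2 * (a*b) := by
      rw [show (Real.sqrt 2 * a) * (Real.sqrt 2 * b) =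
          (Real.sqrt 2 * Real.sqrt 2) * (a*b) by ring,
        Real.mul_self_sqrt (by norm_num : (0:ℝ) ≤ 2)]
    have h1 : jap a * jap b ≤ 2 * (a*b) := by
      calc jap a * jap b ≤ (Real.sqrt 2 * a) * (Real.sqrt 2 * b) :=
            mul_le_mul hAle hBle hB.le (by positivity)
        _ = 2 * (a*b) := w2
    have h2 : s * (jap a * jap b) ≤ s * (2 * (a*b)) :=
      mul_le_mul_of_nonneg_left h1 (by linarith)
    have hsS : s ≤ jap s := le_jap (by linarith)
    have h3 : s * ((2 - Real.sqrt 2)/2 * (a*b)) ≤ jap s * |D| :=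
      mul_le_mul hsS hD1 (mul_pos hc0 habp).le hS.le
    have h4 : 0 ≤ (3/2 - Real.sqrt 2) * (s * (a*b)) := by
      have := s2_lt
      have hsab : (0:ℝ) ≤ s * (a*b) := by positivity
      exact mul_nonneg (by linarith) hsab
    linarith [h2, h3, h4]
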